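/- arXiv:2111.09770 — 4 statements merged into one kernel-verified Lean document; each statement's English description precedes it below -/
import Mathlib

section
/- For d ≥ 3, the 3d-2 product vectors in (ℂ^d)⊗(ℂ^d)⊗(ℂ^d) given by φ_i = (e_0 - e_i)⊗e_0⊗e_i, φ_{i+(d-1)} = e_i⊗(e_0-e_i)⊗e_0, φ_{i+2(d-1)} = e_0⊗e_i⊗(e_0-e_i) for i = 1,…,d-1, together with φ_{3d-2} = (∑_{j=0}^{d-1} e_j)⊗(∑_{j=0}^{d-1} e_j)⊗(∑_{j=0}^{d-1} e_j), are pairwise orthogonal. -/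
open scoped InnerProductSpace BigOperators

/-- The `i`-th standard basis vector of `ℂ^d`. -/
noncomputable def e {d : ℕ} (i : Fin d) : EuclideanSpace ℂ (Fin d) :=
  EuclideanSpace.single i 1

/-- The all-ones vector `∑_{j=0}^{d-1} e_j` of `ℂ^d`. -/
noncomputable def ones (d : ℕ) : EuclideanSpace ℂ (Fin d) :=
  ∑ j : Fin d, e j

/-- The product (tensor) vector `a ⊗ b ⊗ c`, realized in
`ℂ^{d₁·d₂·d₃} = EuclideanSpace ℂ (Fin d₁ × Fin d₂ × Fin d₃)`; its inner product is the
product of the factor inner products. -/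
noncomputable def prod3 {d₁ d₂ d₃ : ℕ} (a : EuclideanSpace ℂ (Fin d₁))
    (b : EuclideanSpace ℂ (Fin d₂)) (c : EuclideanSpace ℂ (Fin d₃)) :
    EuclideanSpace ℂ (Fin d₁ × Fin d₂ × Fin d₃) :=
  (WithLp.equiv 2 _).symm fun p => a p.1 * b p.2.1 * c p.2.2

/-!
Each inner product of two product vectors factors as `⟪a, a'⟫ ⟪b, b'⟫ ⟪c, c'⟫`, so it suffices
that one factor vanishes. The all-ones vector is orthogonal to every `e 0 - e i`; two distinct
vectors of the same family differ in a factor `e i` versus `e j` with `i ≠ j`; and two vectors of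
different families meet `e i` against `e 0` with `i ≠ 0` in some slot.
-/

lemma inner_prod3 {d₁ d₂ d₃ : ℕ} (a a' : EuclideanSpace ℂ (Fin d₁))
    (b b' : EuclideanSpace ℂ (Fin d₂)) (c c' : EuclideanSpace ℂ (Fin d₃)) :
    ⟪prod3 a b c, prod3 a' b' c'⟫_ℂ = ⟪a, a'⟫_ℂ * ⟪b, b'⟫_ℂ * ⟪c, c'⟫_ℂ := by
  simp only [prod3, PiLp.inner_apply, RCLike.inner_apply, WithLp.equiv_symm_apply,
    Fintype.sum_prod_type, map_mul]
  rw [mul_assoc, Finset.sum_mul_sum, Finset.sum_mul_sum]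
  simp only [Finset.mul_sum]
  exact Fintype.sum_congr _ _ fun i => Fintype.sum_congr _ _ fun j =>
    Fintype.sum_congr _ _ fun k => by ring

lemma inner_e {d : ℕ} (i j : Fin d) : ⟪e i, e j⟫_ℂ = if i = j then 1 else 0 := by
  simp [e, EuclideanSpace.inner_single_left]

lemma inner_ones_e {d : ℕ} (i : Fin d) : ⟪ones d, e i⟫_ℂ = 1 := by
  simp [ones, inner_e]

lemma inner_ones_sub_e {d : ℕ} (i j : Fin d) : ⟪ones d, e i - e j⟫_ℂ = 0 := by
  rw [inner_sub_right, inner_ones_e, inner_ones_e, sub_self]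

lemma inner_sub_e_ones {d : ℕ} (i j : Fin d) : ⟪e i - e j, ones d⟫_ℂ = 0 := by
  rw [inner_eq_zero_symm, inner_ones_sub_e]

/-- for `d = m + 3 ≥ 3`, the `3d-2` product vectors of Lemma 1
are pairwise orthogonal. -/
theorem stmt_0 (m : ℕ) :
    ({v | (∃ i : Fin (m + 3), i ≠ 0 ∧ v = prod3 (e 0 - e i) (e 0) (e i)) ∨
          (∃ i : Fin (m + 3), i ≠ 0 ∧ v = prod3 (e i) (e 0 - e i) (e 0)) ∨
          (∃ i : Fin (m + 3), i ≠ 0 ∧ v = prod3 (e 0) (e i) (e 0 - e i)) ∨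
          v = prod3 (ones (m + 3)) (ones (m + 3)) (ones (m + 3))} :
        Set (EuclideanSpace ℂ (Fin (m + 3) × Fin (m + 3) × Fin (m + 3)))).Pairwise
      (fun u v => ⟪u, v⟫_ℂ = 0) := by
  intro u hu v hv huv
  rcases hu with ⟨i, hi, rfl⟩ | ⟨i, hi, rfl⟩ | ⟨i, hi, rfl⟩ | rfl <;>
    rcases hv with ⟨j, hj, rfl⟩ | ⟨j, hj, rfl⟩ | ⟨j, hj, rfl⟩ | rfl <;>
    rw [inner_prod3]
  all_goals first
    | exact absurd rfl huv
    | simp only [inner_ones_sub_e, inner_sub_e_ones, mul_zero, zero_mul]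
    | have hij : i ≠ j := by rintro rfl; exact huv rfl
      simp [inner_e, hij]
    | simp [inner_e, hi, hj.symm]
end

section
/- Let d ≥ 3 and let M be a (d+1)×(d+1) Hermitian complex matrix with entries b_{ij} = ⟨e_i, M e_j⟩ for 0 ≤ i,j ≤ d. Suppose: b_{0i} = 0 for 1 ≤ i ≤ d-1; b_{ij} = 0 for 1 ≤ i ≠ j ≤ d-1; b_{id} = 0 for 1 ≤ i ≤ d-1; ⟨e_0 - e_1, M e_d⟩ = 0; ⟨e_0 - e_i, M(∑_{j=0}^{d} e_j)⟩ = 0 for 1 ≤ i ≤ d-1; and ⟨e_{d-1} - e_d, M(∑_{j=0}^{d} e_j)⟩ = 0. Then M is a scalar multiple of the identity. -/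
open scoped InnerProductSpace BigOperators

/-!
Hypotheses `h1`–`h3`, and `h4` combined with `b_{1d} = 0`, kill every entry above the
diagonal, and hermiticity then kills those below it. For a diagonal matrix,
`⟨e_i, M (∑ e_j)⟩` is the diagonal entry `b_{ii}`, so `h5` and `h6` say that all diagonal
entries are equal.
-/

namespace Matrix

variable {ι α : Type*}

theorem IsHermitian.isDiag_of_forall_lt [LinearOrder ι] [AddMonoid α] [StarAddMonoid α]
    {A : Matrix ι ι α} (hA : A.IsHermitian) (h : ∀ i j, i < j → A i j = 0) : A.IsDiag := by
  intro i j hij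
  rcases hij.lt_or_gt with hlt | hgt
  · exact h i j hlt
  · rw [← hA.apply i j, h j i hgt, star_zero]

theorem IsDiag.sum_row [Fintype ι] [AddCommMonoid α] {A : Matrix ι ι α} (hA : A.IsDiag)
    (i : ι) : ∑ j, A i j = A i i :=
  Finset.sum_eq_single i (fun j _ hji => hA hji.symm) (by simp)

theorem IsDiag.eq_smul_one_of_diag_eq [DecidableEq ι] [MulZeroOneClass α] {A : Matrix ι ι α}
    (hA : A.IsDiag) {c : α} (hc : ∀ i, A i i = c) : A = c • (1 : Matrix ι ι α) := by
  ext i j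
  obtain rfl | hij := eq_or_ne i j
  · simp [hc]
  · simp [hA hij, one_apply_ne hij]

end Matrix

section

open Matrix

variable {n : ℕ} (M : Matrix (Fin n) (Fin n) ℂ) (i : Fin n)

theorem inner_e_toEuclideanLin (v : EuclideanSpace ℂ (Fin n)) :
    ⟪e i, toEuclideanLin M v⟫_ℂ = (M *ᵥ v.ofLp) i := by
  simp [e, EuclideanSpace.inner_single_left]

theorem inner_e_toEuclideanLin_e (j : Fin n) :
    ⟪e i, toEuclideanLin M (e j)⟫_ℂ = M i j := by
  rw [inner_e_toEuclideanLin]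
  simp [e, mulVec_single]

theorem inner_e_toEuclideanLin_ones :
    ⟪e i, toEuclideanLin M (ones n)⟫_ℂ = ∑ j, M i j := by
  rw [inner_e_toEuclideanLin]
  simp [ones, e, Matrix.mulVec, dotProduct]

end

/-- with `d = m + 3 ≥ 3`: constraints on Bob's POVM element in Lemma 2
force a Hermitian `(d+1) × (d+1)` matrix to be a scalar multiple of the identity.
Here `b_{ij} = ⟨e_i, M e_j⟩ = M i j`. -/
theorem stmt_2 (m : ℕ) (M : Matrix (Fin (m + 4)) (Fin (m + 4)) ℂ)
    (hM : M.IsHermitian)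
    -- b_{0i} = 0 for 1 ≤ i ≤ d-1
    (h1 : ∀ i : ℕ, ∀ _hi1 : 1 ≤ i, ∀ _hi2 : i ≤ m + 2,
      M ⟨0, by omega⟩ ⟨i, by omega⟩ = 0)
    -- b_{ij} = 0 for 1 ≤ i ≠ j ≤ d-1
    (h2 : ∀ i j : ℕ, ∀ _hi1 : 1 ≤ i, ∀ _hi2 : i ≤ m + 2, ∀ _hj1 : 1 ≤ j,
      ∀ _hj2 : j ≤ m + 2, ∀ _hij : i ≠ j, M ⟨i, by omega⟩ ⟨j, by omega⟩ = 0)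
    -- b_{id} = 0 for 1 ≤ i ≤ d-1
    (h3 : ∀ i : ℕ, ∀ _hi1 : 1 ≤ i, ∀ _hi2 : i ≤ m + 2,
      M ⟨i, by omega⟩ ⟨m + 3, by omega⟩ = 0)
    -- ⟨e_0 - e_1, M e_d⟩ = 0
    (h4 : ⟪e (0 : Fin (m + 4)) - e 1,
      Matrix.toEuclideanLin M (e ⟨m + 3, by omega⟩)⟫_ℂ = 0)
    -- ⟨e_0 - e_i, M (∑_{j=0}^{d} e_j)⟩ = 0 for 1 ≤ i ≤ d-1
    (h5 : ∀ i : ℕ, ∀ _hi1 : 1 ≤ i, ∀ _hi2 : i ≤ m + 2,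
      ⟪e (0 : Fin (m + 4)) - e ⟨i, by omega⟩,
        Matrix.toEuclideanLin M (ones (m + 4))⟫_ℂ = 0)
    -- ⟨e_{d-1} - e_d, M (∑_{j=0}^{d} e_j)⟩ = 0
    (h6 : ⟪e (⟨m + 2, by omega⟩ : Fin (m + 4)) - e ⟨m + 3, by omega⟩,
      Matrix.toEuclideanLin M (ones (m + 4))⟫_ℂ = 0) :
    ∃ c : ℂ, M = c • (1 : Matrix (Fin (m + 4)) (Fin (m + 4)) ℂ) := by
  have h0d : M ⟨0, by omega⟩ ⟨m + 3, by omega⟩ = 0 := by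
    rw [inner_sub_left, inner_e_toEuclideanLin_e, inner_e_toEuclideanLin_e,
      show (1 : Fin (m + 4)) = ⟨1, by omega⟩ from rfl, h3 1 le_rfl (by omega), sub_zero] at h4
    exact h4
  have hdiag : M.IsDiag := hM.isDiag_of_forall_lt <| by
    rintro ⟨a, ha⟩ ⟨b, hb⟩ (hab : a < b)
    rcases Nat.eq_zero_or_pos a with rfl | ha0 <;> rcases eq_or_ne b (m + 3) with rfl | hbd
    · exact h0d
    · exact h1 b (by omega) (by omega)
    · exact h3 a ha0 (by omega)
    · exact h2 a b ha0 (by omega) (by omega) (by omega) hab.ne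
  have hrow (i : Fin (m + 4)) : ⟪e i, Matrix.toEuclideanLin M (ones (m + 4))⟫_ℂ = M i i := by
    rw [inner_e_toEuclideanLin_ones, hdiag.sum_row]
  have hmid (a : ℕ) (ha1 : 1 ≤ a) (ha2 : a ≤ m + 2) : M ⟨a, by omega⟩ ⟨a, by omega⟩ = M 0 0 := by
    have h := h5 a ha1 ha2
    rw [inner_sub_left, hrow, hrow, sub_eq_zero] at h
    exact h.symm
  refine ⟨M 0 0, hdiag.eq_smul_one_of_diag_eq ?_⟩
  rintro ⟨a, ha⟩
  rcases Nat.eq_zero_or_pos a with rfl | ha0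
  · rfl
  rcases eq_or_ne a (m + 3) with rfl | had
  · rw [inner_sub_left, hrow, hrow, sub_eq_zero] at h6
    rw [← h6, hmid (m + 2) (by omega) le_rfl]
  · exact hmid a ha0 (by omega)
end

section
/- Let n₁, n₂, n₃ ≥ 3 and let M be an n₂×n₂ Hermitian complex matrix with entries b_{ij}. Suppose: b_{0i} = 0 for 1 ≤ i ≤ n₁-1; b_{ij} = 0 for all i ≠ j with 1 ≤ i,j ≤ n₂-1; ⟨e_0 - e_1, M e_j⟩ = 0 for n₁ ≤ j ≤ n₂-1; ⟨e_0 - e_i, M(∑_{j=0}^{n₂-1} e_j)⟩ = 0 for 1 ≤ i ≤ n₁-1; and ⟨e_{j-1} - e_j, M(∑_{j'=0}^{n₂-1} e_{j'})⟩ = 0 for n₁ ≤ j ≤ n₂-1. Then M is a scalar multiple of the identity matrix. -/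
open scoped InnerProductSpace BigOperators

/-!
The off-diagonal entries of row `0` vanish: below `n₁` by assumption, beyond `n₁` because
`b_{0j} = b_{1j}` there and `b_{1j} = 0`. Together with the vanishing of the other off-diagonal
entries and Hermiticity this makes `M` diagonal, so `M` maps the all-ones vector to its diagonal.
The conditions on `M (∑ e_j)` then say `b_{ii} = b_{00}` for `i < n₁` and `b_{j-1,j-1} = b_{jj}`
for `j ≥ n₁`, so all diagonal entries agree.
-/

section BasisVectors

variable {d : ℕ}

lemma inner_e_left (i : Fin d) (v : EuclideanSpace ℂ (Fin d)) : ⟪e i, v⟫_ℂ = v i := by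
  simp [e, EuclideanSpace.inner_single_left]

lemma inner_e_sub_e_left (i j : Fin d) (v : EuclideanSpace ℂ (Fin d)) :
    ⟪e i - e j, v⟫_ℂ = v i - v j := by
  rw [inner_sub_left, inner_e_left, inner_e_left]

@[simp]
lemma ones_apply (i : Fin d) : ones d i = 1 := by
  simp [ones, e]

lemma toEuclideanLin_e_apply (M : Matrix (Fin d) (Fin d) ℂ) (i j : Fin d) :
    Matrix.toEuclideanLin M (e j) i = M i j := by
  simp [Matrix.toLpLin_apply, e]

lemma Matrix.IsDiag.toEuclideanLin_ones_apply {M : Matrix (Fin d) (Fin d) ℂ} (hM : M.IsDiag)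
    (i : Fin d) : Matrix.toEuclideanLin M (ones d) i = M i i := by
  rw [← hM.diagonal_diag]
  simp [Matrix.toLpLin_apply, Matrix.mulVec_diagonal]

end BasisVectors

lemma Matrix.IsHermitian.isDiag_of_offDiag_eq_zero {n 𝕜 : Type*} [RCLike 𝕜]
    {M : Matrix n n 𝕜} (hM : M.IsHermitian) (i₀ : n) (hrow : ∀ j, j ≠ i₀ → M i₀ j = 0)
    (hrest : ∀ i j, i ≠ i₀ → j ≠ i₀ → i ≠ j → M i j = 0) : M.IsDiag := by
  intro i j hij
  by_cases hi : i = i₀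
  · exact hi ▸ hrow j (hi ▸ hij.symm)
  by_cases hj : j = i₀
  · rw [← hM.apply i j, hj, hrow i hi, star_zero]
  exact hrest i j hi hj hij

lemma Matrix.IsDiag.eq_smul_one_of_diag_eq_s8 {n α : Type*} [DecidableEq n] [Semiring α]
    {M : Matrix n n α} (hM : M.IsDiag) {c : α} (hc : ∀ i, M i i = c) : M = c • 1 := by
  rw [← hM.diagonal_diag, Matrix.smul_one_eq_diagonal]
  exact congrArg Matrix.diagonal (funext hc)

lemma Fin.eq_of_eq_of_lt_of_pred_eq {α : Type*} {n m : ℕ} (hm : 0 < m) (f : Fin n → α) (c : α)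
    (hlow : ∀ k : Fin n, k.val < m → f k = c)
    (hstep : ∀ j k : Fin n, m ≤ k.val → j.val + 1 = k.val → f j = f k) (k : Fin n) :
    f k = c := by
  obtain ⟨k, hk⟩ := k
  induction k with
  | zero => exact hlow _ hm
  | succ k ih =>
    by_cases hkm : k + 1 < m
    · exact hlow _ hkm
    · rw [← hstep ⟨k, by omega⟩ ⟨k + 1, hk⟩ (not_lt.mp hkm) rfl, ih]

theorem stmt_8 (n₁ n₂ : ℕ) (hn1 : 3 ≤ n₁) (h12 : n₁ ≤ n₂)
    (M : Matrix (Fin n₂) (Fin n₂) ℂ) (hM : M.IsHermitian)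
    -- b_{0i} = 0 for 1 ≤ i ≤ n₁ - 1
    (hb1 : ∀ i : ℕ, ∀ _hi1 : 1 ≤ i, ∀ _hi2 : i < n₁,
      M ⟨0, by omega⟩ ⟨i, by omega⟩ = 0)
    -- b_{ij} = 0 for i ≠ j, 1 ≤ i, j ≤ n₂ - 1
    (hb2 : ∀ i j : ℕ, ∀ _hi1 : 1 ≤ i, ∀ _hi2 : i < n₂, ∀ _hj1 : 1 ≤ j,
      ∀ _hj2 : j < n₂, ∀ _hij : i ≠ j, M ⟨i, by omega⟩ ⟨j, by omega⟩ = 0)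
    -- ⟨e_0 - e_1, M e_j⟩ = 0 for n₁ ≤ j ≤ n₂ - 1
    (hb3 : ∀ j : ℕ, ∀ _hj1 : n₁ ≤ j, ∀ _hj2 : j < n₂,
      ⟪e (⟨0, by omega⟩ : Fin n₂) - e ⟨1, by omega⟩,
        Matrix.toEuclideanLin M (e ⟨j, by omega⟩)⟫_ℂ = 0)
    -- ⟨e_0 - e_i, M (∑_{j=0}^{n₂-1} e_j)⟩ = 0 for 1 ≤ i ≤ n₁ - 1
    (hb4 : ∀ i : ℕ, ∀ _hi1 : 1 ≤ i, ∀ _hi2 : i < n₁,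
      ⟪e (⟨0, by omega⟩ : Fin n₂) - e ⟨i, by omega⟩,
        Matrix.toEuclideanLin M (ones n₂)⟫_ℂ = 0)
    -- ⟨e_{j-1} - e_j, M (∑_{j'=0}^{n₂-1} e_{j'})⟩ = 0 for n₁ ≤ j ≤ n₂ - 1
    (hb5 : ∀ j : ℕ, ∀ _hj1 : n₁ ≤ j, ∀ _hj2 : j < n₂,
      ⟪e (⟨j - 1, by omega⟩ : Fin n₂) - e ⟨j, by omega⟩,
        Matrix.toEuclideanLin M (ones n₂)⟫_ℂ = 0) :
    ∃ c : ℂ, M = c • (1 : Matrix (Fin n₂) (Fin n₂) ℂ) := by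
  set z : Fin n₂ := ⟨0, by omega⟩
  have hz : ∀ k : Fin n₂, k ≠ z → 1 ≤ k.val := fun k hk =>
    Nat.one_le_iff_ne_zero.mpr fun h => hk (Fin.ext h)
  have hrow : ∀ j, j ≠ z → M z j = 0 := by
    intro j hj
    by_cases hjn : j.val < n₁
    · exact hb1 j (hz j hj) hjn
    · have h := hb3 j (by omega) j.isLt
      rw [inner_e_sub_e_left, toEuclideanLin_e_apply, toEuclideanLin_e_apply,
        hb2 1 j le_rfl (by omega) (by omega) j.isLt (by omega), sub_zero] at h
      exact h
  have hdiag : M.IsDiag := hM.isDiag_of_offDiag_eq_zero z hrow fun i j hi hj hij =>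
    hb2 i j (hz i hi) i.isLt (hz j hj) j.isLt (Fin.val_ne_of_ne hij)
  refine ⟨M z z, hdiag.eq_smul_one_of_diag_eq_s8 ?_⟩
  refine Fin.eq_of_eq_of_lt_of_pred_eq (by omega : 0 < n₁) M.diag (M z z) ?_ ?_
  · intro k hk
    by_cases hk0 : k = z
    · rw [hk0]; rfl
    · have h := hb4 k (hz k hk0) hk
      rw [inner_e_sub_e_left, hdiag.toEuclideanLin_ones_apply,
        hdiag.toEuclideanLin_ones_apply, sub_eq_zero] at h
      exact h.symm
  · intro j k hk hjk
    have h := hb5 k hk k.isLt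
    rw [inner_e_sub_e_left, hdiag.toEuclideanLin_ones_apply,
      hdiag.toEuclideanLin_ones_apply, sub_eq_zero] at h
    rwa [show j = ⟨k.val - 1, by omega⟩ from Fin.ext (Nat.eq_sub_of_add_eq hjk)]
end

section
/- Let d ≥ 3 and let M be a d×d positive semidefinite complex matrix (a POVM element) such that ⟨e_i, M e_0⟩ = 0 (i=1,…,d-1), ⟨e_i, M e_j⟩ = 0 (1 ≤ i ≠ j ≤ d-1), and ⟨e_0 - e_i, M(∑_{j=0}^{d-1}e_j)⟩ = 0 (i=1,…,d-1). Then M = λI for some real λ ≥ 0. -/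
open scoped InnerProductSpace BigOperators ComplexOrder

/-- with `d = m + 3 ≥ 3`: a positive semidefinite `d × d` matrix `M`
(a POVM element) satisfying the orthogonality constraints of Lemma 1 equals `λ I`
for some real `λ ≥ 0`. -/
theorem stmt_10 (m : ℕ) (M : Matrix (Fin (m + 3)) (Fin (m + 3)) ℂ)
    (hM : M.PosSemidef)
    (h1 : ∀ i : Fin (m + 3), i ≠ 0 → ⟪e i, Matrix.toEuclideanLin M (e 0)⟫_ℂ = 0)
    (h2 : ∀ i j : Fin (m + 3), i ≠ 0 → j ≠ 0 → i ≠ j →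
      ⟪e i, Matrix.toEuclideanLin M (e j)⟫_ℂ = 0)
    (h3 : ∀ i : Fin (m + 3), i ≠ 0 →
      ⟪e 0 - e i, Matrix.toEuclideanLin M (ones (m + 3))⟫_ℂ = 0) :
    ∃ l : ℝ, 0 ≤ l ∧ M = (l : ℂ) • (1 : Matrix (Fin (m + 3)) (Fin (m + 3)) ℂ) := by
  have hEntry : ∀ i j : Fin (m + 3), ⟪e i, Matrix.toEuclideanLin M (e j)⟫_ℂ = M i j := by
    intro i j
    rw [e, e, EuclideanSpace.inner_single_left]
    simp [Matrix.toEuclideanLin_apply, Matrix.mulVec_single]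
  have hoff : ∀ i j : Fin (m + 3), i ≠ j → M i j = 0 := by
    intro i j hij
    rcases eq_or_ne j 0 with rfl | hj
    · rw [← hEntry]; exact h1 i hij
    rcases eq_or_ne i 0 with rfl | hi
    · have hj0 : M j 0 = 0 := by rw [← hEntry]; exact h1 j hj
      have hh := hM.isHermitian.apply j 0
      exact star_eq_zero.mp (hh.trans hj0)
    · rw [← hEntry]; exact h2 i j hi hj hij
  -- diagonal equality
  have hdiag : ∀ i : Fin (m + 3), M i i = M 0 0 := by
    intro i
    rcases eq_or_ne i 0 with rfl | hi
    · rfl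
    have h3i := h3 i hi
    have expand : ⟪e 0 - e i, Matrix.toEuclideanLin M (ones (m + 3))⟫_ℂ
        = ∑ j : Fin (m + 3), (M 0 j - M i j) := by
      rw [ones, map_sum, inner_sub_left]
      simp only [inner_sum, hEntry]
      rw [← Finset.sum_sub_distrib]
    rw [expand] at h3i
    have hterm : ∀ j : Fin (m + 3), (M 0 j - M i j)
        = (if j = 0 then M 0 0 else 0) - (if j = i then M i i else 0) := by
      intro j
      rcases eq_or_ne j 0 with rfl | hj0
      · simp [hoff i 0 hi, Ne.symm hi]
      rcases eq_or_ne j i with rfl | hji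
      · simp [hj0, hoff 0 j (Ne.symm hj0)]
      · simp [hj0, hji, hoff 0 j (Ne.symm hj0), hoff i j (by exact fun h => hji (h ▸ rfl) )]
    rw [Finset.sum_congr rfl (fun j _ => hterm j)] at h3i
    rw [Finset.sum_sub_distrib, Finset.sum_ite_eq' Finset.univ 0 (fun _ => M 0 0),
      Finset.sum_ite_eq' Finset.univ i (fun _ => M i i)] at h3i
    simp at h3i
    linear_combination -h3i
  -- M 0 0 is nonneg real
  have hpos : 0 ≤ M 0 0 := by
    have := hM.dotProduct_mulVec_nonneg (Pi.single 0 1)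
    simpa [dotProduct, Matrix.mulVec, Pi.single_apply, Finset.sum_ite_eq] using this
  refine ⟨(M 0 0).re, ?_, ?_⟩
  · exact_mod_cast (Complex.le_def.mp hpos).1
  · have him : (M 0 0).im = 0 := by
      have := (Complex.le_def.mp hpos).2
      simpa using this.symm
    ext i j
    rcases eq_or_ne i j with rfl | hij
    · simp [Matrix.one_apply, hdiag i, Complex.ext_iff, him]
    · simp [Matrix.one_apply, hij, hoff i j hij]
end
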